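/- arXiv:2303.15367 — 6 statements merged into one kernel-verified Lean document; each statement's English description precedes it below -/
import Mathlib

section
/- Let L₁,…,L_d be fixed finite nonempty subsets of {1,…,k}, and let S = {i : |L_i| ≤ t} for a fixed integer t ≥ 1 and B = {1,…,d} \ S. Fix elements x_i ∈ L_i for i ∈ S, and for i ∈ B choose σ(i) ∈ L_i independently and uniformly at random. Let L = {1,…,k} \ ({x_i : i ∈ S} ∪ {σ(i) : i ∈ B}). Then the expected size of L is at least (k - |S|)·exp(-(1+1/t)·d/(k - |S|)), provided |S| < k. -/
/-!
Sum over the colours `c` the probability that `c` is missed. A colour not among the fixed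
`x i` (there are at least `k - |S|` of them) is missed with probability
`∏_{i ∈ B, c ∈ L i} (1 - 1/|L i|)`, and each factor is at least `exp (-(1 + 1/t) / |L i|)`
because `|L i| ≥ t + 1`. The exponents summed over the colours add up to at most `d`, since
each `i` contributes `|L i|⁻¹` at most `|L i|` times, so convexity of `exp` bounds the sum of
the probabilities over `k - |S|` colours from below by `(k - |S|) exp (-(1 + 1/t) d / (k - |S|))`.
-/

open Finset Real

section ProductCounting

variable {ι α : Type*} [Fintype ι] [DecidableEq ι] (L : ι → Finset α)

lemma card_filter_pi_forall (P : ι → α → Prop) [∀ i, DecidablePred (P i)]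
    [DecidablePred fun σ : ∀ i, {a // a ∈ L i} => ∀ i, P i (σ i)] :
    #(univ.filter fun σ : ∀ i, {a // a ∈ L i} => ∀ i, P i (σ i)) = ∏ i, #((L i).filter (P i)) := by
  rw [← Fintype.card_subtype,
    Fintype.card_congr (Equiv.subtypePiEquivPi (p := fun i (a : {a // a ∈ L i}) => P i a)),
    Fintype.card_pi]
  congr 1 with i
  rw [Fintype.card_subtype, univ_eq_attach, filter_attach, card_map, card_attach]

lemma card_filter_pi_forall_ne [DecidableEq α] (P : ι → α → Prop) [∀ i, DecidablePred (P i)]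
    [DecidablePred fun σ : ∀ i, {a // a ∈ L i} => ∀ i, P i (σ i)] (c : α)
    [DecidablePred fun σ : ∀ i, {a // a ∈ L i} => ∀ i, (σ i : α) ≠ c] :
    #((univ.filter fun σ : ∀ i, {a // a ∈ L i} => ∀ i, P i (σ i)).filter
        fun σ => ∀ i, (σ i : α) ≠ c) = ∏ i, #(((L i).filter (P i)).erase c) := by
  rw [filter_filter]
  simp_rw [← forall_and, ← filter_ne', filter_filter]
  exact card_filter_pi_forall L fun i a => P i a ∧ a ≠ c

end ProductCounting

lemma exp_neg_mul_inv_le_one_sub_inv {t m : ℝ} (ht : 0 < t) (hm : t + 1 ≤ m) :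
    exp (-(1 + 1 / t) * m⁻¹) ≤ 1 - m⁻¹ := by
  have hm0 : 0 < m := by linarith
  have hm1 : 0 < m - 1 := by linarith
  have hpos : 0 < 1 - m⁻¹ := by rw [sub_pos]; exact inv_lt_one_of_one_lt₀ (by linarith)
  have hlog : -(1 + 1 / t) * m⁻¹ ≤ log (1 - m⁻¹) := calc
    -(1 + 1 / t) * m⁻¹ ≤ 1 - (1 - m⁻¹)⁻¹ := by
      rw [show 1 - (1 - m⁻¹)⁻¹ = -1 / (m - 1) by field_simp; ring]
      rw [neg_mul, neg_div, neg_le_neg_iff, div_le_iff₀ hm1]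
      field_simp
      linarith
    _ ≤ log (1 - m⁻¹) := one_sub_inv_le_log_of_pos hpos
  exact (exp_le_exp.2 hlog).trans_eq (exp_log hpos)

lemma card_mul_exp_sum_div_card_le_sum_exp {α : Type*} {T : Finset α} (hT : T.Nonempty)
    (f : α → ℝ) : #T * exp ((∑ c ∈ T, f c) / #T) ≤ ∑ c ∈ T, exp (f c) := by
  have hN : (0 : ℝ) < #T := by exact_mod_cast hT.card_pos
  have hJensen := convexOn_exp.map_sum_le (t := T) (w := fun _ => (#T : ℝ)⁻¹) (p := f)
    (fun _ _ => by positivity) (by simp [hN.ne']) (fun _ _ => Set.mem_univ _)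
  simp only [smul_eq_mul, ← mul_sum] at hJensen
  rwa [inv_mul_eq_div, inv_mul_eq_div, le_div_iff₀' hN] at hJensen

lemma exists_subset_sdiff_image_card_eq {β γ : Type*} [DecidableEq γ] (U : Finset γ)
    (s : Finset β) (f : β → γ) : ∃ T ⊆ U \ s.image f, #T = #U - #s :=
  exists_subset_card_eq ((Nat.sub_le_sub_left card_image_le _).trans (le_card_sdiff _ _))

section HitProbability

variable {α : Type*} [DecidableEq α]

noncomputable def hitProb (A : Finset α) (c : α) : ℝ :=
  if c ∈ A then (#A : ℝ)⁻¹ else 0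

lemma sum_hitProb_le_one (A T : Finset α) : ∑ c ∈ T, hitProb A c ≤ 1 := by
  simp only [hitProb, sum_ite_mem, sum_const, nsmul_eq_mul]
  rcases (T ∩ A).eq_empty_or_nonempty with h | h
  · simp [h]
  · have hA : (0 : ℝ) < #A := by exact_mod_cast (h.mono inter_subset_right).card_pos
    rw [← div_eq_mul_inv, div_le_one hA]
    exact_mod_cast card_le_card inter_subset_right

lemma card_mul_exp_neg_hitProb_le_card_erase {t : ℝ} (ht : 0 < t) {A : Finset α} {c : α}
    (hA : c ∈ A → t + 1 ≤ #A) :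
    #A * exp (-(1 + 1 / t) * hitProb A c) ≤ #(A.erase c) := by
  by_cases hc : c ∈ A
  · have hm : (0 : ℝ) < #A := by linarith [hA hc]
    rw [hitProb, if_pos hc, card_erase_of_mem hc, Nat.cast_pred (card_pos.2 ⟨c, hc⟩)]
    calc (#A : ℝ) * exp (-(1 + 1 / t) * (#A : ℝ)⁻¹) ≤ #A * (1 - (#A : ℝ)⁻¹) :=
          mul_le_mul_of_nonneg_left (exp_neg_mul_inv_le_one_sub_inv ht (hA hc)) hm.le
      _ = #A - 1 := by field_simp
  · simp [hitProb, hc]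

variable {ι : Type*} [Fintype ι]

/-- `∏ i, #((A i).erase c)` counts the choices `σ ∈ ∏ i, A i` that miss the colour `c`. -/
theorem card_mul_exp_mul_prod_card_le_sum_prod_card_erase {t : ℝ} (ht : 0 < t)
    (A : ι → Finset α) {T : Finset α} (hT : T.Nonempty)
    (hbig : ∀ c ∈ T, ∀ i, c ∈ A i → t + 1 ≤ #(A i)) :
    #T * exp (-(1 + 1 / t) * Fintype.card ι / #T) * ∏ i, (#(A i) : ℝ) ≤
      ∑ c ∈ T, ∏ i, (#((A i).erase c) : ℝ) := by
  set b : α → ℝ := fun c => -(1 + 1 / t) * ∑ i, hitProb (A i) c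
  have hsum_b : -(1 + 1 / t) * Fintype.card ι ≤ ∑ c ∈ T, b c := by
    have hload : ∑ c ∈ T, ∑ i, hitProb (A i) c ≤ Fintype.card ι := by
      rw [sum_comm]
      simpa using sum_le_sum fun i (_ : i ∈ univ) => sum_hitProb_le_one (A i) T
    simp only [b, ← mul_sum]
    exact mul_le_mul_of_nonpos_left hload (neg_nonpos.2 (by positivity))
  have hmissed : ∀ c ∈ T, (∏ i, (#(A i) : ℝ)) * exp (b c) ≤ ∏ i, (#((A i).erase c) : ℝ) := by
    intro c hc
    show (∏ i, (#(A i) : ℝ)) * exp (-(1 + 1 / t) * ∑ i, hitProb (A i) c) ≤ _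
    rw [mul_sum, exp_sum, ← prod_mul_distrib]
    exact prod_le_prod (fun _ _ => by positivity)
      fun i _ => card_mul_exp_neg_hitProb_le_card_erase ht (hbig c hc i)
  have hprod : (0 : ℝ) ≤ ∏ i, (#(A i) : ℝ) := prod_nonneg fun _ _ => Nat.cast_nonneg _
  have hN : (0 : ℝ) ≤ #T := Nat.cast_nonneg _
  calc #T * exp (-(1 + 1 / t) * Fintype.card ι / #T) * ∏ i, (#(A i) : ℝ)
      ≤ #T * exp ((∑ c ∈ T, b c) / #T) * ∏ i, (#(A i) : ℝ) :=
        mul_le_mul_of_nonneg_right (mul_le_mul_of_nonneg_left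
          (exp_le_exp.2 (div_le_div_of_nonneg_right hsum_b hN)) hN) hprod
    _ ≤ (∑ c ∈ T, exp (b c)) * ∏ i, (#(A i) : ℝ) :=
        mul_le_mul_of_nonneg_right (card_mul_exp_sum_div_card_le_sum_exp hT b) hprod
    _ = ∑ c ∈ T, (∏ i, (#(A i) : ℝ)) * exp (b c) := by rw [mul_comm, mul_sum]
    _ ≤ ∑ c ∈ T, ∏ i, (#((A i).erase c) : ℝ) := sum_le_sum hmissed

end HitProbability

theorem stmt_3_general (d k t : ℕ) (ht : 1 ≤ t) (L : Fin d → Finset ℕ)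
    (x : Fin d → ℕ) (hx : ∀ i, x i ∈ L i)
    (S : Finset (Fin d)) (hS : S = Finset.univ.filter (fun i : Fin d => (L i).card ≤ t))
    (hSk : S.card < k)
    (Ω : Finset (∀ i : Fin d, {n // n ∈ L i}))
    (hΩ : Ω = Finset.univ.filter (fun σ : ∀ i : Fin d, {n // n ∈ L i} =>
      ∀ i ∈ S, (σ i : ℕ) = x i)) :
    ((k : ℝ) - S.card) * Real.exp (-(1 + 1 / (t : ℝ)) * d / ((k : ℝ) - S.card)) ≤
      (∑ σ ∈ Ω,
        (((Finset.Icc 1 k).filter (fun c => ∀ i, (σ i : ℕ) ≠ c)).card : ℝ)) / Ω.card := by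
  -- `A i` is `{x i}` for `i ∈ S` and `L i` otherwise.
  set A : Fin d → Finset ℕ := fun i => (L i).filter fun n => i ∈ S → n = x i
  have hΩA : (#Ω : ℝ) = ∏ i, (#(A i) : ℝ) := by
    rw [hΩ, ← Nat.cast_prod]
    exact congrArg Nat.cast (card_filter_pi_forall L fun i n => i ∈ S → n = x i)
  have hΩpos : (0 : ℝ) < #Ω := by
    exact_mod_cast card_pos.2 ⟨(fun i => ⟨x i, hx i⟩ : ∀ i, {n // n ∈ L i}), by simp [hΩ]⟩
  obtain ⟨T, hT, hTcard⟩ := exists_subset_sdiff_image_card_eq (Icc 1 k) S x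
  rw [Nat.card_Icc, Nat.add_sub_cancel] at hTcard
  have hbig : ∀ c ∈ T, ∀ i, c ∈ A i → (t : ℝ) + 1 ≤ #(A i) := by
    intro c hc i hci
    have hi : i ∉ S := fun hi => (mem_sdiff.1 (hT hc)).2
      (mem_image.2 ⟨i, hi, ((mem_filter.1 hci).2 hi).symm⟩)
    rw [show A i = L i from filter_true_of_mem fun _ _ h => absurd h hi]
    exact_mod_cast (by simpa [hS] using hi : t < #(L i))
  have hbound := card_mul_exp_mul_prod_card_le_sum_prod_card_erase
    (by positivity : (0 : ℝ) < t) A (card_pos.1 (by omega)) hbig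
  rw [Fintype.card_fin, hTcard, Nat.cast_sub hSk.le, ← hΩA] at hbound
  rw [le_div_iff₀ hΩpos]
  calc _ ≤ ∑ c ∈ T, ∏ i, (#((A i).erase c) : ℝ) := hbound
    _ = ∑ c ∈ T, (#(Ω.filter fun σ => ∀ i, (σ i : ℕ) ≠ c) : ℝ) := by
      refine sum_congr rfl fun c _ => ?_
      rw [hΩ, ← Nat.cast_prod]
      exact congrArg Nat.cast (card_filter_pi_forall_ne L (fun i n => i ∈ S → n = x i) c).symm
    _ ≤ ∑ c ∈ Icc 1 k, (#(Ω.filter fun σ => ∀ i, (σ i : ℕ) ≠ c) : ℝ) :=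
      sum_le_sum_of_subset_of_nonneg (hT.trans sdiff_subset) fun _ _ _ => Nat.cast_nonneg _
    _ = _ := by
      exact_mod_cast (sum_card_bipartiteAbove_eq_sum_card_bipartiteBelow (s := Ω) (t := Icc 1 k)
        (r := fun σ c => ∀ i, (σ i : ℕ) ≠ c)).symm

theorem stmt_3 (d k t : ℕ) (ht : 1 ≤ t) (L : Fin d → Finset ℕ)
    (hne : ∀ i, (L i).Nonempty) (hsub : ∀ i, L i ⊆ Finset.Icc 1 k)
    (x : Fin d → ℕ) (hx : ∀ i, x i ∈ L i)
    (S : Finset (Fin d)) (hS : S = Finset.univ.filter (fun i : Fin d => (L i).card ≤ t))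
    (hSk : S.card < k)
    (Ω : Finset (∀ i : Fin d, {n // n ∈ L i}))
    (hΩ : Ω = Finset.univ.filter (fun σ : ∀ i : Fin d, {n // n ∈ L i} =>
      ∀ i ∈ S, (σ i : ℕ) = x i)) :
    ((k : ℝ) - S.card) * Real.exp (-(1 + 1 / (t : ℝ)) * d / ((k : ℝ) - S.card)) ≤
      (∑ σ ∈ Ω,
        (((Finset.Icc 1 k).filter (fun c => ∀ i, (σ i : ℕ) ≠ c)).card : ℝ)) / Ω.card :=
  stmt_3_general d k t ht L x hx S hS hSk Ω hΩ
end

section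
/- Let G be a graph, v a vertex, and k ≥ 1. If 𝛔 is a uniformly random proper k-colouring of G \ v and 𝛕 is a uniformly random proper k-colouring of G (assuming both sets are nonempty), then E[ℓ_𝛕(v)] = E[ℓ_𝛔(v)²] / E[ℓ_𝛔(v)], and consequently E[ℓ_𝛕(v)] ≥ E[ℓ_𝛔(v)]. -/
/-!
Splitting a colouring τ of G as (τ v, τ restricted to G \ v) identifies the proper colourings of G
with the pairs (c, σ) where σ is a proper colouring of G \ v and c is one of its ℓ_σ(v) free
colours at v. Summing over these pairs, #𝒞_k(G) = ∑ ℓ_σ(v) and ∑_τ ℓ_τ(v) = ∑_σ ℓ_σ(v)², since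
ℓ_τ(v) only depends on the restriction of τ. The inequality is then Cauchy–Schwarz,
(∑ ℓ_σ)² ≤ #𝒞_k(G \ v) · ∑ ℓ_σ².
-/

open Finset

namespace SimpleGraph

variable {V α : Type*} [Fintype V] [DecidableEq V] [Fintype α] [DecidableEq α]
  (G : SimpleGraph V) [DecidableRel G.Adj] (v : V)

def properColorings : Finset (V → α) :=
  univ.filter fun τ => ∀ u w, G.Adj u w → τ u ≠ τ w

def freeColors (σ : {u // u ≠ v} → α) : Finset α :=
  univ.filter fun c => ∀ u : {u // u ≠ v}, G.Adj u v → σ u ≠ c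

lemma freeColors_restrict (τ : V → α) :
    G.freeColors v (Subtype.restrict (· ≠ v) τ) =
      univ.filter fun c => ∀ u, G.Adj u v → τ u ≠ c := by
  ext c
  simp only [freeColors, mem_filter, mem_univ, true_and, Subtype.forall, Subtype.restrict]
  exact ⟨fun h u huv => h u huv.ne huv, fun h u _ => h u⟩

lemma mem_properColorings_iff_restrict (τ : V → α) :
    τ ∈ G.properColorings ↔ Subtype.restrict (· ≠ v) τ ∈ (G.comap Subtype.val).properColorings ∧
      τ v ∈ G.freeColors v (Subtype.restrict (· ≠ v) τ) := by
  simp only [properColorings, freeColors, mem_filter, mem_univ, true_and, comap_adj,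
    Subtype.forall, Subtype.restrict]
  refine ⟨fun h => ⟨fun u _ w _ huw => h u w huw, fun u _ huv => h u v huv⟩, ?_⟩
  rintro ⟨hrest, hv⟩ u w huw
  by_cases hu : u = v
  · subst hu
    exact (hv w huw.ne' huw.symm).symm
  by_cases hw : w = v
  · subst hw
    exact hv u hu huw
  exact hrest u hu w hw huw

lemma sum_properColorings_comp_restrict {M : Type*} [AddCommMonoid M]
    (f : ({u // u ≠ v} → α) → M) :
    ∑ τ ∈ G.properColorings, f (Subtype.restrict (· ≠ v) τ) =
      ∑ σ ∈ (G.comap Subtype.val).properColorings, #(G.freeColors v σ) • f σ := by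
  calc ∑ τ ∈ G.properColorings, f (Subtype.restrict (· ≠ v) τ)
      = ∑ p ∈ G.properColorings.map (Equiv.funSplitAt v α).toEmbedding, f p.2 := by
        rw [sum_map]; rfl
    _ = _ := by
      rw [sum_finset_product_right _ (G.comap Subtype.val).properColorings (G.freeColors v)
        fun p => ?_]
      · simp only [sum_const]
      · obtain ⟨τ, rfl⟩ := (Equiv.funSplitAt v α).surjective p
        rw [mem_map_equiv, Equiv.symm_apply_apply]
        exact mem_properColorings_iff_restrict G v τ

end SimpleGraph

section

variable {ι K : Type*} [Field K] [CharZero K] (s : Finset ι) (f g : ι → K)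

lemma Finset.sum_div_card_div_sum_div_card :
    (∑ i ∈ s, g i / #s) / (∑ i ∈ s, f i / #s) = (∑ i ∈ s, g i) / ∑ i ∈ s, f i := by
  rcases s.eq_empty_or_nonempty with rfl | hs
  · simp
  · rw [← sum_div, ← sum_div, div_div_div_cancel_right₀ (Nat.cast_ne_zero.mpr hs.card_pos.ne')]

variable [LinearOrder K] [IsStrictOrderedRing K]

lemma Finset.sum_div_card_le_sum_sq_div_sum (hf : ∀ i ∈ s, 0 ≤ f i) :
    (∑ i ∈ s, f i) / #s ≤ (∑ i ∈ s, f i ^ 2) / ∑ i ∈ s, f i := by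
  rcases (sum_nonneg hf).eq_or_lt with hzero | hpos
  · rw [← hzero]; simp
  have hcard : (0 : K) < #s := by
    exact_mod_cast card_pos.mpr (nonempty_of_sum_ne_zero hpos.ne')
  rw [div_le_div_iff₀ hcard hpos, ← sq, mul_comm]
  exact sq_sum_le_card_mul_sum_sq

end

open SimpleGraph

theorem stmt_7_general (V : Type) [Fintype V] [DecidableEq V] (G : SimpleGraph V)
    [DecidableRel G.Adj] (v : V) (k : ℕ)
    (CG : Finset (V → Fin k))
    (hCG : CG = Finset.univ.filter
      (fun τ : V → Fin k => ∀ u w : V, G.Adj u w → τ u ≠ τ w))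
    (CG' : Finset ({u : V // u ≠ v} → Fin k))
    (hCG' : CG' = Finset.univ.filter
      (fun σ : {u : V // u ≠ v} → Fin k =>
        ∀ a b : {u : V // u ≠ v}, G.Adj a.1 b.1 → σ a ≠ σ b))
    (ℓτ : (V → Fin k) → ℕ)
    (hℓτ : ∀ τ, ℓτ τ = (Finset.univ.filter
      (fun c : Fin k => ∀ u : V, G.Adj u v → τ u ≠ c)).card)
    (ℓσ : ({u : V // u ≠ v} → Fin k) → ℕ)
    (hℓσ : ∀ σ, ℓσ σ = (Finset.univ.filter
      (fun c : Fin k => ∀ u : {u : V // u ≠ v}, G.Adj u.1 v → σ u ≠ c)).card) :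
    (∑ τ ∈ CG, (ℓτ τ : ℝ)) / CG.card =
        (∑ σ ∈ CG', (ℓσ σ : ℝ) ^ 2 / CG'.card) / (∑ σ ∈ CG', (ℓσ σ : ℝ) / CG'.card) ∧
      (∑ σ ∈ CG', (ℓσ σ : ℝ)) / CG'.card ≤ (∑ τ ∈ CG, (ℓτ τ : ℝ)) / CG.card := by
  replace hCG : CG = G.properColorings := hCG
  replace hCG' : CG' = (G.comap (Subtype.val : {u // u ≠ v} → V)).properColorings := hCG'
  replace hℓσ : ∀ σ, ℓσ σ = #(G.freeColors v σ) := hℓσ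
  have hℓτ_restrict : ∀ τ, ℓτ τ = ℓσ (Subtype.restrict (· ≠ v) τ) := fun τ => by
    rw [hℓτ, hℓσ, freeColors_restrict]
  have hcard : (#CG : ℝ) = ∑ σ ∈ CG', (ℓσ σ : ℝ) := by
    simpa [hCG, hCG', hℓσ] using
      sum_properColorings_comp_restrict (α := Fin k) G v fun _ => (1 : ℝ)
  have hsum : ∑ τ ∈ CG, (ℓτ τ : ℝ) = ∑ σ ∈ CG', (ℓσ σ : ℝ) ^ 2 := by
    simpa [hCG, hCG', hℓτ_restrict, ← hℓσ, sq] using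
      sum_properColorings_comp_restrict G v fun σ => (ℓσ σ : ℝ)
  rw [hsum, hcard, sum_div_card_div_sum_div_card]
  exact ⟨rfl, sum_div_card_le_sum_sq_div_sum _ _ fun _ _ => Nat.cast_nonneg _⟩

theorem stmt_7 (V : Type) [Fintype V] [DecidableEq V] (G : SimpleGraph V)
    [DecidableRel G.Adj] (v : V) (k : ℕ) (hk : 1 ≤ k)
    (CG : Finset (V → Fin k))
    (hCG : CG = Finset.univ.filter
      (fun τ : V → Fin k => ∀ u w : V, G.Adj u w → τ u ≠ τ w))
    (CG' : Finset ({u : V // u ≠ v} → Fin k))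
    (hCG' : CG' = Finset.univ.filter
      (fun σ : {u : V // u ≠ v} → Fin k =>
        ∀ a b : {u : V // u ≠ v}, G.Adj a.1 b.1 → σ a ≠ σ b))
    (hne : CG.Nonempty) (hne' : CG'.Nonempty)
    (ℓτ : (V → Fin k) → ℕ)
    (hℓτ : ∀ τ, ℓτ τ = (Finset.univ.filter
      (fun c : Fin k => ∀ u : V, G.Adj u v → τ u ≠ c)).card)
    (ℓσ : ({u : V // u ≠ v} → Fin k) → ℕ)
    (hℓσ : ∀ σ, ℓσ σ = (Finset.univ.filter
      (fun c : Fin k => ∀ u : {u : V // u ≠ v}, G.Adj u.1 v → σ u ≠ c)).card) :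
    (∑ τ ∈ CG, (ℓτ τ : ℝ)) / CG.card =
        (∑ σ ∈ CG', (ℓσ σ : ℝ) ^ 2 / CG'.card) / (∑ σ ∈ CG', (ℓσ σ : ℝ) / CG'.card) ∧
      (∑ σ ∈ CG', (ℓσ σ : ℝ)) / CG'.card ≤ (∑ τ ∈ CG, (ℓτ τ : ℝ)) / CG.card :=
  stmt_7_general V G v k CG hCG CG' hCG' ℓτ hℓτ ℓσ hℓσ
end

section
/- Suppose (X₁,…,X_s) are Ber(p)-dominated binary random variables, Q₁,…,Q_m ⊆ {1,…,s} are pairwise disjoint subsets of equal size, δ > 0, and R_i is the indicator that ∑_{j∈Q_i} X_j > (1+δ)·p·|Q_i|. Let q = (e^δ/(1+δ)^{1+δ})^{p|Q_1|}. Then (R₁,…,R_m) are Ber(q)-dominated, i.e., E[∏_{i∈J} R_i] ≤ q^{|J|} for all J ⊆ {1,…,m}. -/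
theorem stmt_9 (s m : ℕ) (Ω : Type) [Fintype Ω] (w : Ω → ℝ) (hw0 : ∀ ω, 0 ≤ w ω)
    (hw1 : ∑ ω, w ω = 1) (p : ℝ) (hp0 : 0 ≤ p) (hp1 : p ≤ 1)
    (X : Fin s → Ω → ℝ) (hbin : ∀ i ω, X i ω = 0 ∨ X i ω = 1)
    (hdom : ∀ J : Finset (Fin s), ∑ ω, w ω * ∏ i ∈ J, X i ω ≤ p ^ J.card)
    (Q : Fin m → Finset (Fin s)) (hdisj : ∀ i j, i ≠ j → Disjoint (Q i) (Q j))
    (c : ℕ) (hc : ∀ i, (Q i).card = c)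
    (δ : ℝ) (hδ : 0 < δ)
    (R : Fin m → Ω → ℝ)
    (hR : ∀ i ω, R i ω = if (1 + δ) * p * c < ∑ j ∈ Q i, X j ω then 1 else 0)
    (q : ℝ) (hq : q = (Real.exp δ / (1 + δ) ^ (1 + δ)) ^ (p * c)) :
    ∀ J : Finset (Fin m), ∑ ω, w ω * ∏ i ∈ J, R i ω ≤ q ^ J.card := by
  intro J
  have h1δ : (0:ℝ) < 1 + δ := by linarith
  set L : ℝ := Real.log (1 + δ) with hLdef
  have hL : 0 < L := Real.log_pos (by linarith)
  have hX0 : ∀ j ω, 0 ≤ X j ω := by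
    intro j ω; rcases hbin j ω with h | h <;> simp [h]
  set U : Finset (Fin s) := J.biUnion Q with hU
  have hUcard : U.card = c * J.card := by
    rw [hU, Finset.card_biUnion (fun i _ j _ hij => hdisj i j hij)]
    simp [hc, mul_comm]
  -- each factor 1 + δ * X j ω equals exp (L * X j ω)
  have hfac : ∀ j ω, 1 + δ * X j ω = Real.exp (L * X j ω) := by
    intro j ω
    rcases hbin j ω with h | h
    · simp [h]
    · rw [h, mul_one, mul_one, hLdef, Real.exp_log h1δ]
  -- pointwise bound
  have key : ∀ ω, ∏ i ∈ J, R i ω ≤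
      Real.exp (-(L * ((1 + δ) * p * c)) * J.card) * ∏ j ∈ U, (1 + δ * X j ω) := by
    intro ω
    have hrhs : Real.exp (-(L * ((1 + δ) * p * c)) * J.card) * ∏ j ∈ U, (1 + δ * X j ω)
        = ∏ i ∈ J, (Real.exp (-(L * ((1 + δ) * p * c))) * ∏ j ∈ Q i, (1 + δ * X j ω)) := by
      rw [Finset.prod_mul_distrib, Finset.prod_const, hU,
        Finset.prod_biUnion (fun i _ j _ hij => hdisj i j hij), ← Real.exp_nat_mul]
      ring_nf
    rw [hrhs]
    apply Finset.prod_le_prod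
    · intro i _
      rw [hR]
      split <;> norm_num
    · intro i _
      have hprod : ∏ j ∈ Q i, (1 + δ * X j ω) = Real.exp (L * ∑ j ∈ Q i, X j ω) := by
        rw [Finset.mul_sum, Real.exp_sum]
        exact Finset.prod_congr rfl fun j _ => hfac j ω
      rw [hR, hprod, ← Real.exp_add]
      split
      · rename_i h
        refine le_trans (by norm_num) (Real.one_le_exp ?_)
        have : (1 + δ) * p * c ≤ ∑ j ∈ Q i, X j ω := le_of_lt h
        nlinarith
      · positivity
  -- sum the pointwise bound
  set C : ℝ := Real.exp (-(L * ((1 + δ) * p * c)) * J.card) with hC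
  have hC0 : 0 ≤ C := le_of_lt (Real.exp_pos _)
  have step1 : ∑ ω, w ω * ∏ i ∈ J, R i ω ≤ C * ∑ ω, w ω * ∏ j ∈ U, (1 + δ * X j ω) := by
    rw [Finset.mul_sum]
    apply Finset.sum_le_sum
    intro ω _
    calc w ω * ∏ i ∈ J, R i ω ≤ w ω * (C * ∏ j ∈ U, (1 + δ * X j ω)) :=
          mul_le_mul_of_nonneg_left (key ω) (hw0 ω)
      _ = C * (w ω * ∏ j ∈ U, (1 + δ * X j ω)) := by ring
  -- expand the product and use domination
  have expand : ∀ ω, ∏ j ∈ U, (1 + δ * X j ω)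
      = ∑ T ∈ U.powerset, δ ^ T.card * ∏ j ∈ T, X j ω := by
    intro ω
    have := Finset.prod_add (fun j => δ * X j ω) (fun _ => (1:ℝ)) U
    simp only [add_comm (δ * _) (1:ℝ)] at this
    rw [this]
    refine Finset.sum_congr rfl fun T _ => ?_
    rw [Finset.prod_const_one, mul_one, Finset.prod_mul_distrib, Finset.prod_const]
  have step2 : ∑ ω, w ω * ∏ j ∈ U, (1 + δ * X j ω) ≤ (δ * p + 1) ^ U.card := by
    have hsum : ∑ ω, w ω * ∏ j ∈ U, (1 + δ * X j ω)
        = ∑ T ∈ U.powerset, δ ^ T.card * ∑ ω, w ω * ∏ j ∈ T, X j ω := by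
      simp only [expand, Finset.mul_sum]
      rw [Finset.sum_comm]
      refine Finset.sum_congr rfl fun T _ => ?_
      exact Finset.sum_congr rfl fun ω _ => by ring
    rw [hsum]
    have hrhs : (δ * p + 1) ^ U.card = ∑ T ∈ U.powerset, δ ^ T.card * p ^ T.card := by
      rw [← Finset.prod_const (δ * p + 1), Finset.prod_add]
      refine Finset.sum_congr rfl fun T _ => ?_
      rw [Finset.prod_const_one, mul_one, Finset.prod_const, mul_pow]
    rw [hrhs]
    apply Finset.sum_le_sum
    intro T _
    exact mul_le_mul_of_nonneg_left (hdom T) (pow_nonneg (le_of_lt hδ) _)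
  have step3 : (δ * p + 1) ^ U.card ≤ Real.exp (δ * p * (c * J.card)) := by
    have h1 : δ * p + 1 ≤ Real.exp (δ * p) := by
      have := Real.add_one_le_exp (δ * p); linarith
    calc (δ * p + 1) ^ U.card ≤ Real.exp (δ * p) ^ U.card :=
          pow_le_pow_left₀ (by positivity) h1 _
      _ = Real.exp (δ * p * (c * J.card)) := by
          rw [← Real.exp_nat_mul, hUcard]; ring_nf; push_cast; ring_nf
  -- identify q
  have hq' : q = Real.exp ((δ - L * (1 + δ)) * (p * c)) := by
    rw [hq]
    have hbase : Real.exp δ / (1 + δ) ^ (1 + δ) = Real.exp (δ - L * (1 + δ)) := by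
      rw [Real.rpow_def_of_pos h1δ, Real.exp_sub, hLdef]
    rw [hbase, ← Real.exp_mul]
  have hfinal : C * Real.exp (δ * p * (c * J.card)) = q ^ J.card := by
    rw [hC, hq', ← Real.exp_nat_mul, ← Real.exp_add]
    congr 1
    ring
  calc ∑ ω, w ω * ∏ i ∈ J, R i ω ≤ C * ∑ ω, w ω * ∏ j ∈ U, (1 + δ * X j ω) := step1
    _ ≤ C * Real.exp (δ * p * (c * J.card)) := by
        refine mul_le_mul_of_nonneg_left (le_trans step2 step3) hC0
    _ = q ^ J.card := hfinal
end

section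
/- Let H be a finite graph, L a list-assignment with |L(v)| ≥ deg(v)+1 for every vertex v, and x any colour. If 𝛔 is a uniformly random proper L-colouring of H, then the probability that 𝛔(v) ≠ x for all v ∈ V(H) is at least ∏_{v∈V(H)} (1 - 1/(|L(v)| - deg(v))). -/
/-!
Let `A S` be the set of proper `L`-colourings that avoid the colour `x` on the vertex set `S`,
and let `k v = |L(v)| - deg(v)`. Passing from `A S` to `A (S ∪ {v})` removes the colourings `σ`
with `σ v = x`. Each such `σ` can be recoloured at `v` in at least `k v - 1` ways (avoid `x` and
the at most `deg v` colours on the neighbours of `v`), landing in `A (S ∪ {v})`, and every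
colouring there arises from at most one `σ` in this way. Hence at most a `1 / k v` fraction of
`A S` is lost, and adding the vertices one at a time gives the product bound, since `A ∅`, the set
of all proper colourings, is nonempty by the greedy argument.
-/

namespace ListColoring

open Finset

variable {V : Type} [Fintype V] {H : SimpleGraph V} [DecidableRel H.Adj] {L : V → Finset ℕ}

variable (H) in
def IsProperOn (σ : ∀ v : V, {n // n ∈ L v}) (S : Finset V) : Prop :=
  ∀ u ∈ S, ∀ w ∈ S, H.Adj u w → (σ u : ℕ) ≠ σ w

instance (σ : ∀ v : V, {n // n ∈ L v}) (S : Finset V) : Decidable (IsProperOn H σ S) := by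
  unfold IsProperOn; infer_instance

variable (H) in
def neighborColors (σ : ∀ v : V, {n // n ∈ L v}) (v : V) : Finset ℕ :=
  (H.neighborFinset v).image fun u => (σ u : ℕ)

variable (H) in
lemma card_neighborColors_le (σ : ∀ v : V, {n // n ∈ L v}) (v : V) :
    #(neighborColors H σ v) ≤ H.degree v :=
  card_image_le.trans (H.card_neighborFinset_eq_degree v).le

lemma ne_of_notMem_neighborColors {σ : ∀ v : V, {n // n ∈ L v}} {v w : V} {c : ℕ}
    (hc : c ∉ neighborColors H σ v) (hvw : H.Adj v w) : c ≠ σ w := fun h =>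
  hc (mem_image.2 ⟨w, (H.mem_neighborFinset v w).2 hvw, h.symm⟩)

lemma one_le_card_sub_degree {v : V} (hv : H.degree v + 1 ≤ #(L v)) :
    (1 : ℝ) ≤ #(L v) - H.degree v := by
  rw [le_sub_iff_add_le']
  exact_mod_cast hv

variable [DecidableEq V]

lemma IsProperOn.update_insert {σ : ∀ v : V, {n // n ∈ L v}} {S : Finset V} {v : V}
    {c : {n // n ∈ L v}} (hσ : IsProperOn H σ S) (hc : (c : ℕ) ∉ neighborColors H σ v) :
    IsProperOn H (Function.update σ v c) (insert v S) := by
  rintro u hu w hw hadj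
  rcases eq_or_ne u v with rfl | huv
  · rw [Function.update_self, Function.update_of_ne hadj.ne.symm]
    exact ne_of_notMem_neighborColors hc hadj
  rcases eq_or_ne w v with rfl | hwv
  · rw [Function.update_self, Function.update_of_ne huv]
    exact (ne_of_notMem_neighborColors hc hadj.symm).symm
  rw [Function.update_of_ne huv, Function.update_of_ne hwv]
  exact hσ u ((mem_insert.1 hu).resolve_left huv) w ((mem_insert.1 hw).resolve_left hwv) hadj

lemma exists_isProperOn (hL : ∀ v : V, H.degree v + 1 ≤ #(L v)) (S : Finset V) :
    ∃ σ : ∀ v : V, {n // n ∈ L v}, IsProperOn H σ S := by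
  induction S using Finset.induction_on with
  | empty =>
    have hne (v : V) : (L v).Nonempty := card_pos.1 (by have := hL v; omega)
    exact ⟨fun v => ⟨_, (hne v).choose_spec⟩, by simp [IsProperOn]⟩
  | @insert v S _ ih =>
    obtain ⟨σ, hσ⟩ := ih
    obtain ⟨c, hc⟩ : (L v \ neighborColors H σ v).Nonempty := by
      have := le_card_sdiff (neighborColors H σ v) (L v)
      have := card_neighborColors_le H σ v
      have := hL v
      exact card_pos.1 (by omega)
    rw [mem_sdiff] at hc
    exact ⟨_, IsProperOn.update_insert (H := H) (c := ⟨c, hc.1⟩) hσ hc.2⟩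

variable (H L) in
def properAvoiding (x : ℕ) (S : Finset V) : Finset (∀ v : V, {n // n ∈ L v}) :=
  univ.filter fun σ => IsProperOn H σ univ ∧ ∀ v ∈ S, (σ v : ℕ) ≠ x

lemma properAvoiding_insert (x : ℕ) (S : Finset V) (v : V) :
    properAvoiding H L x (insert v S) =
      (properAvoiding H L x S).filter fun σ => (σ v : ℕ) ≠ x := by
  ext σ
  simp only [properAvoiding, mem_filter, mem_univ, true_and, forall_mem_insert]
  tauto

lemma update_mem_properAvoiding_insert {x : ℕ} {S : Finset V} {v : V}
    {σ : ∀ v : V, {n // n ∈ L v}} (hσ : σ ∈ properAvoiding H L x S) {c : {n // n ∈ L v}}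
    (hc : (c : ℕ) ∉ insert x (neighborColors H σ v)) :
    Function.update σ v c ∈ properAvoiding H L x (insert v S) := by
  rw [mem_insert, not_or] at hc
  simp only [properAvoiding, mem_filter, mem_univ, true_and] at hσ ⊢
  refine ⟨by simpa using hσ.1.update_insert hc.2, fun u hu => ?_⟩
  rcases eq_or_ne u v with rfl | huv
  · rw [Function.update_self]
    exact hc.1
  · rw [Function.update_of_ne huv]
    exact hσ.2 u ((mem_insert.1 hu).resolve_left huv)

variable (H L) in
lemma card_filter_eq_mul_le_card_properAvoiding_insert (x : ℕ) (S : Finset V) (v : V) :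
    #((properAvoiding H L x S).filter fun σ => (σ v : ℕ) = x) * (#(L v) - (H.degree v + 1)) ≤
      #(properAvoiding H L x (insert v S)) := by
  refine (card_mul_le_card_mul (fun σ τ : ∀ v : V, {n // n ∈ L v} => ∀ u ≠ v, σ u = τ u)
    (n := 1) ?_ ?_).trans_eq (mul_one _)
  · intro σ hσ
    set F := insert x (neighborColors H σ v)
    have hF : #F ≤ H.degree v + 1 :=
      (card_insert_le _ _).trans (by grw [card_neighborColors_le H σ v])
    calc #(L v) - (H.degree v + 1) ≤ #(L v) - #F := by omega
      _ ≤ #(L v \ F) := le_card_sdiff _ _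
      _ = #(L v \ F).attach := card_attach.symm
      _ ≤ _ := by
        refine card_le_card_of_injOn (fun c => Function.update σ v ⟨c, (mem_sdiff.1 c.2).1⟩)
          (fun c _ => ?_) (fun c _ c' _ h => ?_)
        · rw [mem_coe, mem_bipartiteAbove]
          exact ⟨update_mem_properAvoiding_insert (mem_filter.1 hσ).1 (mem_sdiff.1 c.2).2,
            fun u hu => (Function.update_of_ne hu _ _).symm⟩
        · simpa using congrFun h v
  · intro τ _
    refine card_le_one.2 fun σ hσ σ' hσ' => funext fun u => ?_
    simp only [mem_bipartiteBelow, mem_filter] at hσ hσ'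
    rcases eq_or_ne u v with rfl | hu
    · exact Subtype.ext (hσ.1.2.trans hσ'.1.2.symm)
    · exact (hσ.2 u hu).trans (hσ'.2 u hu).symm

lemma mul_card_properAvoiding_le_card_insert (x : ℕ) (S : Finset V) {v : V}
    (hv : H.degree v + 1 ≤ #(L v)) :
    (1 - 1 / ((#(L v) : ℝ) - H.degree v)) * #(properAvoiding H L x S) ≤
      #(properAvoiding H L x (insert v S)) := by
  set k : ℝ := #(L v) - H.degree v
  have hk : 1 ≤ k := one_le_card_sub_degree hv
  set T := (properAvoiding H L x S).filter fun σ => (σ v : ℕ) = x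
  have hsplit : #T + #(properAvoiding H L x (insert v S)) = #(properAvoiding H L x S) := by
    rw [properAvoiding_insert]
    exact card_filter_add_card_filter_not _
  have hcount : (#T : ℝ) * (k - 1) ≤ #(properAvoiding H L x (insert v S)) := by
    have h := card_filter_eq_mul_le_card_properAvoiding_insert H L x S v
    rw [← Nat.cast_le (α := ℝ), Nat.cast_mul, Nat.cast_sub hv] at h
    push_cast at h
    linarith
  rw [← hsplit, Nat.cast_add, one_sub_div (by positivity), div_mul_eq_mul_div,
    div_le_iff₀ (by positivity)]
  linarith

lemma prod_mul_card_properAvoiding_empty_le (hL : ∀ v : V, H.degree v + 1 ≤ #(L v)) (x : ℕ)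
    (S : Finset V) :
    (∏ v ∈ S, (1 - 1 / ((#(L v) : ℝ) - H.degree v))) * #(properAvoiding H L x ∅) ≤
      #(properAvoiding H L x S) := by
  induction S using Finset.induction_on with
  | empty => simp
  | @insert v S hv ih =>
    have hk := one_le_card_sub_degree (hL v)
    have hfactor : 0 ≤ 1 - 1 / ((#(L v) : ℝ) - H.degree v) :=
      sub_nonneg.2 (div_le_one_of_le₀ hk (zero_le_one.trans hk))
    rw [prod_insert hv, mul_assoc]
    exact (mul_le_mul_of_nonneg_left ih hfactor).trans
      (mul_card_properAvoiding_le_card_insert x S (hL v))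

end ListColoring

open ListColoring in
theorem stmt_11 (V : Type) [Fintype V] [DecidableEq V] (H : SimpleGraph V)
    [DecidableRel H.Adj] (L : V → Finset ℕ)
    (hL : ∀ v : V, H.degree v + 1 ≤ (L v).card) (x : ℕ) :
    ∏ v : V, (1 - 1 / (((L v).card : ℝ) - H.degree v)) ≤
      (((Finset.univ.filter (fun σ : ∀ v : V, {n // n ∈ L v} =>
          (∀ u w : V, H.Adj u w → (σ u : ℕ) ≠ (σ w : ℕ)) ∧
            ∀ v : V, (σ v : ℕ) ≠ x)).card : ℝ)) /
        ((Finset.univ.filter (fun σ : ∀ v : V, {n // n ∈ L v} =>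
          ∀ u w : V, H.Adj u w → (σ u : ℕ) ≠ (σ w : ℕ))).card : ℝ) := by
  have h_empty : properAvoiding H L x ∅ = Finset.univ.filter (fun σ : ∀ v : V, {n // n ∈ L v} =>
      ∀ u w : V, H.Adj u w → (σ u : ℕ) ≠ (σ w : ℕ)) := by
    ext σ
    simp [properAvoiding, IsProperOn]
  have h_univ : properAvoiding H L x Finset.univ = Finset.univ.filter
      (fun σ : ∀ v : V, {n // n ∈ L v} =>
        (∀ u w : V, H.Adj u w → (σ u : ℕ) ≠ (σ w : ℕ)) ∧ ∀ v : V, (σ v : ℕ) ≠ x) := by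
    ext σ
    simp [properAvoiding, IsProperOn]
  have h_pos : 0 < (properAvoiding H L x ∅).card := by
    obtain ⟨σ, hσ⟩ := exists_isProperOn hL Finset.univ
    exact Finset.card_pos.2 ⟨σ, by simpa [properAvoiding] using hσ⟩
  rw [← h_empty, ← h_univ, le_div_iff₀ (by exact_mod_cast h_pos)]
  exact prod_mul_card_properAvoiding_empty_le hL x Finset.univ
end

section
/- Fix an integer g ≥ 3. Suppose G₀ is a d-regular graph on n₀ vertices with girth at least g admitting a proper (d+1)-colouring σ₀ in which every vertex is frozen (i.e., every proper (d+1)-colouring in the same cluster of the distance-1 colouring graph agrees with σ₀ everywhere). Let G be the disjoint union of n/n₀ copies of G₀ and 𝛔 a uniformly random proper (d+1)-colouring of G. Then with high probability as n → ∞, the number of vertices of G that are frozen in 𝛔 is at least n/(2·n₀·(d+1)^{n₀}) · n₀ = Θ(n). -/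
/-- Two proper `k`-colourings of `G` are adjacent in the (distance-1) colouring graph
if both are proper and they differ on at most one vertex. -/
def ColAdj {V : Type} (G : SimpleGraph V) {k : ℕ} (τ σ : V → Fin k) : Prop :=
  (∀ u w : V, G.Adj u w → τ u ≠ τ w) ∧ (∀ u w : V, G.Adj u w → σ u ≠ σ w) ∧
    Set.ncard {u : V | τ u ≠ σ u} ≤ 1

/-- A vertex `v` is frozen in the proper colouring `τ` if every colouring in the
same cluster (connected component of the colouring graph) agrees with `τ` at `v`. -/
def IsFrozen {V : Type} (G : SimpleGraph V) {k : ℕ} (τ : V → Fin k) (v : V) : Prop :=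
  ∀ σ : V → Fin k, Relation.ReflTransGen (ColAdj G) τ σ → σ v = τ v

/-- The disjoint union of `m` copies of `G₀`. -/
def copies {V₀ : Type} (G₀ : SimpleGraph V₀) (m : ℕ) : SimpleGraph (Fin m × V₀) where
  Adj a b := a.1 = b.1 ∧ G₀.Adj a.2 b.2
  symm := by constructor; intro a b h; exact ⟨h.1.symm, h.2.symm⟩
  loopless := by constructor; intro a h; exact G₀.irrefl h.2

/-! A proper colouring of the disjoint union is an `m`-tuple of proper colourings of `G₀`, so under
the uniform measure the copies are coloured independently and uniformly among the `N ≤ (d+1)^n₀`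
proper colourings of `G₀`. Moves in the colouring graph of the union project to moves in each copy,
so every copy coloured exactly `σ₀` contributes `n₀` frozen vertices. The number `X` of such copies
is binomial with mean `m / N`, and Chernoff's bound
`P(X < m / (2N)) ≤ e^{m/(2N)} E[e^{-X}] ≤ exp (-(1/2 - e⁻¹) m / N)` tends to `0`. -/

open Finset Real Filter Topology

lemma one_sub_le_card_filter_div {α : Type*} {s : Finset α} {p : α → Prop} [DecidablePred p]
    {η : ℝ} (hs : 0 < #s) (h : (#{x ∈ s | ¬p x} : ℝ) ≤ η * #s) :
    1 - η ≤ #(s.filter p) / #s := by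
  have hsplit : (#(s.filter p) : ℝ) + #{x ∈ s | ¬p x} = #s := by
    exact_mod_cast card_filter_add_card_filter_not p
  rw [le_div_iff₀ (by exact_mod_cast hs)]
  linarith

section LowerTail
variable {ι β : Type*} [Fintype ι] [DecidableEq ι] [DecidableEq β] {S : Finset β} {a : β}

lemma sum_exp_neg_card_filter_eq (ha : a ∈ S) :
    ∑ f ∈ Fintype.piFinset (fun _ : ι => S), exp (-#{i | f i = a}) =
      (exp (-1) + (#S - 1)) ^ Fintype.card ι := by
  have hprod (f : ι → β) : exp (-#{i | f i = a}) = ∏ i, if f i = a then exp (-1) else 1 := by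
    rw [prod_ite, prod_const, prod_const_one, mul_one, ← exp_nat_mul]
    ring_nf
  have hsum : ∑ b ∈ S, (if b = a then exp (-1) else 1) = exp (-1) + (#S - 1) := by
    rw [sum_ite, sum_const, sum_const, filter_eq' S a, if_pos ha, card_singleton,
      filter_ne' S a, card_erase_of_mem ha, one_smul, nsmul_one,
      Nat.cast_pred (card_pos.2 ⟨a, ha⟩)]
  rw [sum_congr rfl fun f _ => hprod f,
    ← prod_univ_sum (fun _ : ι => S) fun _ b => if b = a then exp (-1) else 1, hsum, prod_const,
    card_univ]

/-- Chernoff's bound for the lower tail, through the exponential moment of `-#{i | f i = a}`. -/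
lemma card_filter_card_lt_le (ha : a ∈ S) (t : ℝ) :
    (#{f ∈ Fintype.piFinset (fun _ : ι => S) | (#{i | f i = a} : ℝ) < t} : ℝ) ≤
      exp t * (exp (-1) + (#S - 1)) ^ Fintype.card ι := by
  set F := Fintype.piFinset (fun _ : ι => S)
  rw [← sum_exp_neg_card_filter_eq ha, mul_sum]
  calc (#{f ∈ F | (#{i | f i = a} : ℝ) < t} : ℝ)
      = ∑ f ∈ F with (#{i | f i = a} : ℝ) < t, (1 : ℝ) := by simp
    _ ≤ ∑ f ∈ F with (#{i | f i = a} : ℝ) < t, exp t * exp (-#{i | f i = a}) := by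
        refine sum_le_sum fun f hf => ?_
        rw [← exp_add, one_le_exp_iff]
        linarith [(mem_filter.1 hf).2]
    _ ≤ ∑ f ∈ F, exp t * exp (-#{i | f i = a}) :=
        sum_le_sum_of_subset_of_nonneg (filter_subset _ _)
          fun _ _ _ => (mul_pos (exp_pos _) (exp_pos _)).le

lemma card_filter_card_lt_half_mean_le (ha : a ∈ S) :
    (#{f ∈ Fintype.piFinset (fun _ : ι => S) |
        (#{i | f i = a} : ℝ) < Fintype.card ι / (2 * #S)} : ℝ) ≤
      exp (-((1 / 2 - exp (-1)) / #S * Fintype.card ι)) * #S ^ Fintype.card ι := by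
  set N : ℝ := (#S : ℝ)
  have hN : 0 < N := by simpa [N] using card_pos.2 ⟨a, ha⟩
  have hbase : exp (-1) + (N - 1) ≤ N * exp ((exp (-1) - 1) / N) := by
    have := add_one_le_exp ((exp (-1) - 1) / N)
    calc exp (-1) + (N - 1) = N * ((exp (-1) - 1) / N + 1) := by field_simp; ring
      _ ≤ _ := mul_le_mul_of_nonneg_left this hN.le
  have hnonneg : 0 ≤ exp (-1) + (N - 1) := by
    have : 1 ≤ N := by simpa [N] using card_pos.2 ⟨a, ha⟩
    linarith [exp_pos (-1)]
  refine (card_filter_card_lt_le ha _).trans ?_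
  calc exp (Fintype.card ι / (2 * N)) * (exp (-1) + (N - 1)) ^ Fintype.card ι
      ≤ exp (Fintype.card ι / (2 * N)) * (N * exp ((exp (-1) - 1) / N)) ^ Fintype.card ι := by
        gcongr
    _ = _ := by
        rw [mul_pow, ← exp_nat_mul, mul_left_comm, ← exp_add, mul_comm]
        congr 2
        field_simp
        ring

lemma tendsto_card_filter_card_lt_half_mean_div (ha : a ∈ S) :
    Tendsto (fun m : ℕ => (#{f ∈ Fintype.piFinset (fun _ : Fin m => S) |
        (#{i | f i = a} : ℝ) < m / (2 * #S)} : ℝ) / #S ^ m) atTop (𝓝 0) := by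
  have hN : (0 : ℝ) < #S := by simpa using card_pos.2 ⟨a, ha⟩
  have hc : 0 < (1 / 2 - exp (-1)) / #S := div_pos (by linarith [exp_neg_one_lt_half]) hN
  have hexp : Tendsto (fun m : ℕ => exp (-((1 / 2 - exp (-1)) / #S * m))) atTop (𝓝 0) :=
    tendsto_exp_neg_atTop_nhds_zero.comp
      (tendsto_natCast_atTop_atTop.const_mul_atTop hc)
  refine squeeze_zero (fun m => by positivity) (fun m => ?_) hexp
  rw [div_le_iff₀ (pow_pos hN m)]
  simpa only [Fintype.card_fin] using card_filter_card_lt_half_mean_le (ι := Fin m) ha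

end LowerTail

section Copies
variable {V₀ : Type} {G₀ : SimpleGraph V₀} {k m : ℕ}

lemma copies_proper_iff {σ : Fin m × V₀ → Fin k} :
    (∀ a b : Fin m × V₀, (copies G₀ m).Adj a b → σ a ≠ σ b) ↔
      ∀ i u w, G₀.Adj u w → Function.curry σ i u ≠ Function.curry σ i w := by
  refine ⟨fun h i u w huw => h (i, u) (i, w) ⟨rfl, huw⟩, ?_⟩
  rintro h ⟨i, u⟩ ⟨j, w⟩ ⟨rfl : i = j, huw⟩
  exact h i u w huw

lemma ColAdj.curry_copies [Finite V₀] {τ σ : Fin m × V₀ → Fin k}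
    (h : ColAdj (copies G₀ m) τ σ) (i : Fin m) :
    ColAdj G₀ (Function.curry τ i) (Function.curry σ i) := by
  obtain ⟨hτ, hσ, hdiff⟩ := h
  refine ⟨fun u w huw => hτ _ _ ⟨rfl, huw⟩, fun u w huw => hσ _ _ ⟨rfl, huw⟩,
    le_trans (Set.ncard_le_ncard_of_injOn (i, ·) (fun u hu => hu) ?_ (Set.toFinite _)) hdiff⟩
  exact fun u _ w _ h => (Prod.mk.inj h).2

lemma isFrozen_copies_of_curry_eq [Finite V₀] {σ₀ : V₀ → Fin k}
    (hfrozen : ∀ v, IsFrozen G₀ σ₀ v) {σ : Fin m × V₀ → Fin k} {i : Fin m}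
    (hi : Function.curry σ i = σ₀) (v : V₀) : IsFrozen (copies G₀ m) σ (i, v) := by
  intro τ hτ
  have hproj : Relation.ReflTransGen (ColAdj G₀) σ₀ (Function.curry τ i) :=
    hi ▸ Relation.ReflTransGen.lift (Function.curry · i) (fun _ _ h => h.curry_copies i) _ _ hτ
  exact (hfrozen v _ hproj).trans (congrFun hi v).symm

lemma card_curry_eq_mul_le_card_isFrozen [Fintype V₀] [DecidableEq V₀] {σ₀ : V₀ → Fin k}
    (hfrozen : ∀ v, IsFrozen G₀ σ₀ v) (σ : Fin m × V₀ → Fin k) :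
    #{i | Function.curry σ i = σ₀} * Fintype.card V₀ ≤
      Nat.card {v : Fin m × V₀ // IsFrozen (copies G₀ m) σ v} := by
  classical
  rw [Nat.card_eq_fintype_card, Fintype.card_subtype, ← card_univ, ← card_product]
  refine card_le_card fun ⟨i, v⟩ hiv => ?_
  simp only [mem_product, mem_filter, mem_univ, true_and] at hiv ⊢
  exact isFrozen_copies_of_curry_eq hfrozen hiv.1 v

lemma card_curry_eq_lt_of_card_isFrozen_lt [Fintype V₀] [DecidableEq V₀] {σ₀ : V₀ → Fin k}
    (hfrozen : ∀ v, IsFrozen G₀ σ₀ v) {σ : Fin m × V₀ → Fin k} {M : ℝ}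
    (hσ : (Nat.card {v : Fin m × V₀ // IsFrozen (copies G₀ m) σ v} : ℝ) <
      m * Fintype.card V₀ / M) :
    (#{i | Function.curry σ i = σ₀} : ℝ) < m / M := by
  refine lt_of_mul_lt_mul_right ?_ (Nat.cast_nonneg (Fintype.card V₀))
  calc (#{i | Function.curry σ i = σ₀} * Fintype.card V₀ : ℝ)
      ≤ Nat.card {v : Fin m × V₀ // IsFrozen (copies G₀ m) σ v} := by
        exact_mod_cast card_curry_eq_mul_le_card_isFrozen hfrozen σ
    _ < m / M * Fintype.card V₀ := by rwa [div_mul_eq_mul_div]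

open Classical in
lemma card_proper_copies [Fintype V₀] (G₀ : SimpleGraph V₀) (m : ℕ) :
    #{σ : Fin m × V₀ → Fin k | ∀ a b, (copies G₀ m).Adj a b → σ a ≠ σ b} =
      #{c : V₀ → Fin k | ∀ u w, G₀.Adj u w → c u ≠ c w} ^ m := by
  rw [card_equiv (Equiv.curry _ _ _)
    (t := Fintype.piFinset fun _ => {c : V₀ → Fin k | ∀ u w, G₀.Adj u w → c u ≠ c w})
    fun σ => by
      simp only [mem_filter, mem_univ, true_and, Fintype.mem_piFinset, Equiv.curry_apply]
      exact copies_proper_iff]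
  simp [Fintype.card_piFinset]

end Copies

open Classical in
theorem stmt_18_general (d : ℕ) (V₀ : Type) [Fintype V₀]
    (G₀ : SimpleGraph V₀)
    (σ₀ : V₀ → Fin (d + 1)) (hσ₀ : ∀ u w : V₀, G₀.Adj u w → σ₀ u ≠ σ₀ w)
    (hfrozen : ∀ v : V₀, IsFrozen G₀ σ₀ v) :
    ∀ η : ℝ, 0 < η → ∃ m₀ : ℕ, ∀ m : ℕ, m₀ ≤ m →
      1 - η ≤
        (((Finset.univ.filter (fun σ : Fin m × V₀ → Fin (d + 1) =>
             (∀ a b : Fin m × V₀, (copies G₀ m).Adj a b → σ a ≠ σ b) ∧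
               ((m * Fintype.card V₀ : ℝ) /
                   (2 * (d + 1) ^ (Fintype.card V₀)) ≤
                 (Nat.card {v : Fin m × V₀ // IsFrozen (copies G₀ m) σ v} : ℝ)))).card : ℝ) /
          ((Finset.univ.filter (fun σ : Fin m × V₀ → Fin (d + 1) =>
             ∀ a b : Fin m × V₀, (copies G₀ m).Adj a b → σ a ≠ σ b)).card : ℝ)) := by
  intro η hη
  set S : Finset (V₀ → Fin (d + 1)) := {c | ∀ u w, G₀.Adj u w → c u ≠ c w}
  have hσ₀S : σ₀ ∈ S := mem_filter.2 ⟨mem_univ _, hσ₀⟩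
  have hSpos : 0 < #S := card_pos.2 ⟨σ₀, hσ₀S⟩
  have hS : (#S : ℝ) ≤ (d + 1) ^ Fintype.card V₀ := by
    exact_mod_cast (card_le_univ S).trans (by simp)
  obtain ⟨m₀, hm₀⟩ := eventually_atTop.1
    ((tendsto_card_filter_card_lt_half_mean_div hσ₀S).eventually (ge_mem_nhds hη))
  refine ⟨m₀, fun m hm => ?_⟩
  rw [← filter_filter]
  set P : Finset (Fin m × V₀ → Fin (d + 1)) :=
    {σ | ∀ a b : Fin m × V₀, (copies G₀ m).Adj a b → σ a ≠ σ b}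
  have hP : #P = #S ^ m := card_proper_copies G₀ m
  refine one_sub_le_card_filter_div (s := P) (by rw [hP]; positivity) ?_
  rw [hP, Nat.cast_pow, ← div_le_iff₀ (by positivity)]
  refine le_trans (div_le_div_of_nonneg_right ?_ (by positivity)) (hm₀ m hm)
  refine Nat.cast_le.2 (card_le_card_of_injOn Function.curry (fun σ hσ => ?_)
    Function.curry_injective.injOn)
  obtain ⟨hσP, hσfew⟩ := mem_filter.1 hσ
  refine mem_filter.2 ⟨?_, (card_curry_eq_lt_of_card_isFrozen_lt hfrozen
    (not_le.1 hσfew)).trans_le (by gcongr)⟩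
  simpa [S, Fintype.mem_piFinset] using copies_proper_iff.1 (mem_filter.1 hσP).2

open Classical in
theorem stmt_18 (g : ℕ) (hg : 3 ≤ g) (d : ℕ) (V₀ : Type) [Fintype V₀] [Nonempty V₀]
    (G₀ : SimpleGraph V₀) [DecidableRel G₀.Adj]
    (hreg : G₀.IsRegularOfDegree d) (hgirth : (g : ℕ∞) ≤ G₀.girth)
    (σ₀ : V₀ → Fin (d + 1)) (hσ₀ : ∀ u w : V₀, G₀.Adj u w → σ₀ u ≠ σ₀ w)
    (hfrozen : ∀ v : V₀, IsFrozen G₀ σ₀ v) :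
    ∀ η : ℝ, 0 < η → ∃ m₀ : ℕ, ∀ m : ℕ, m₀ ≤ m →
      1 - η ≤
        (((Finset.univ.filter (fun σ : Fin m × V₀ → Fin (d + 1) =>
             (∀ a b : Fin m × V₀, (copies G₀ m).Adj a b → σ a ≠ σ b) ∧
               ((m * Fintype.card V₀ : ℝ) /
                   (2 * (d + 1) ^ (Fintype.card V₀)) ≤
                 (Nat.card {v : Fin m × V₀ // IsFrozen (copies G₀ m) σ v} : ℝ)))).card : ℝ) /
          ((Finset.univ.filter (fun σ : Fin m × V₀ → Fin (d + 1) =>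
             ∀ a b : Fin m × V₀, (copies G₀ m).Adj a b → σ a ≠ σ b)).card : ℝ)) :=
  stmt_18_general d V₀ G₀ σ₀ hσ₀ hfrozen
end

section
/- Let ε ∈ (0,1), let Δ be sufficiently large in terms of ε, and let k satisfy (1-ε)·k·ln k ≥ Δ. Let L₁,…,L_Δ ⊆ {1,…,k} be nonempty lists such that the number of indices i with |L_i| ≤ 5/ε is at most εk/5. Then there exists a choice σ(i) ∈ L_i for each i ∈ {1,…,Δ} such that |{1,…,k} \ {σ(i) : i ∈ [Δ]}| ≥ Δ^{ε/2}. -/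
/-!
The short lists get arbitrary colours; at most `εk/5` colours are spent on them, leaving
`g ≥ 4k/5` free ones. A fixed long list (of size at least `m = ⌈5/ε⌉`) lies in a uniformly random
`t`-subset of the free colours, `t = ⌈Δ^{ε/2}⌉`, with probability at most
`C(t, m) / C(g, m) ≤ t^m / (g + 1 - m)^m < 1/Δ`, so by the union bound some `t`-set `U` contains no
long list. Every long list then has a colour outside `U`, and `U` stays unused.
-/

open Real Finset

namespace Nat

theorem mul_choose_lt_choose_of_mul_pow_lt {a g t m : ℕ} (h : a * t ^ m < (g + 1 - m) ^ m) :
    a * t.choose m < g.choose m := by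
  refine Nat.lt_of_mul_lt_mul_left (a := m !) ?_
  calc m ! * (a * t.choose m) = a * t.descFactorial m := by
        rw [descFactorial_eq_factorial_mul_choose]; ring
    _ ≤ a * t ^ m := Nat.mul_le_mul_left a (descFactorial_le_pow t m)
    _ < (g + 1 - m) ^ m := h
    _ ≤ g.descFactorial m := pow_sub_le_descFactorial g m
    _ = m ! * g.choose m := descFactorial_eq_factorial_mul_choose g m

theorem mul_choose_sub_lt_choose {a g t m : ℕ} (hmt : m ≤ t) (htg : t ≤ g)
    (h : a * t ^ m < (g + 1 - m) ^ m) :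
    a * (g - m).choose (t - m) < g.choose t := by
  refine Nat.lt_of_mul_lt_mul_right (a := g.choose m) ?_
  calc a * (g - m).choose (t - m) * g.choose m = a * (g.choose m * (g - m).choose (t - m)) := by
        ring
    _ = g.choose t * (a * t.choose m) := by rw [← choose_mul hmt]; ring
    _ < g.choose t * g.choose m :=
        Nat.mul_lt_mul_of_pos_left (mul_choose_lt_choose_of_mul_pow_lt h) (choose_pos htg)

end Nat

namespace Finset

variable {α ι : Type*} [DecidableEq α]

theorem card_filter_powersetCard_superset_le {s G : Finset α} {m t : ℕ} (hm : m ≤ #s)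
    (hmt : m ≤ t) : #((G.powersetCard t).filter (s ⊆ ·)) ≤ (#G - m).choose (t - m) := by
  by_cases hsG : s ⊆ G
  · obtain ⟨s', hs's, rfl⟩ := exists_subset_card_eq hm
    calc #((G.powersetCard t).filter (s ⊆ ·))
        ≤ #((G.powersetCard t).filter (s' ⊆ ·)) :=
          card_le_card (monotone_filter_right _ fun _ _ hsU => hs's.trans hsU)
      _ = _ := card_filter_powersetCard_subset s' G t (hs's.trans hsG) hmt
  · rw [filter_false_of_mem fun U hU hsU => hsG (hsU.trans (mem_powersetCard.1 hU).1)]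
    exact Nat.zero_le _

theorem exists_mem_powersetCard_forall_not_subset (G : Finset α) (I : Finset ι)
    (L : ι → Finset α) {m t : ℕ} (hL : ∀ i ∈ I, m ≤ #(L i)) (hmt : m ≤ t) (htG : t ≤ #G)
    (h : #I * t ^ m < (#G + 1 - m) ^ m) :
    ∃ U ∈ G.powersetCard t, ∀ i ∈ I, ¬ L i ⊆ U := by
  have hbad : #(I.biUnion fun i => (G.powersetCard t).filter (L i ⊆ ·)) <
      #(G.powersetCard t) := by
    calc _ ≤ #I * (#G - m).choose (t - m) := card_biUnion_le_card_mul _ _ _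
            fun i hi => card_filter_powersetCard_superset_le (hL i hi) hmt
      _ < (#G).choose t := Nat.mul_choose_sub_lt_choose hmt htG h
      _ = _ := (card_powersetCard t G).symm
  obtain ⟨U, hU, hUgood⟩ := exists_mem_notMem_of_card_lt_card hbad
  exact ⟨U, hU, fun i hi hLU => hUgood (mem_biUnion.2 ⟨i, hi, mem_filter.2 ⟨hU, hLU⟩⟩)⟩

theorem exists_choice_le_card_unused [Fintype ι] (L : ι → Finset α) (hL : ∀ i, (L i).Nonempty)
    (S : Finset α) (small : Finset ι) {m t : ℕ} (hlarge : ∀ i ∉ small, m ≤ #(L i))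
    (hmt : m ≤ t) (ht : t + #small ≤ #S)
    (h : Fintype.card ι * t ^ m < (#S - #small + 1 - m) ^ m) :
    ∃ σ : ι → α, (∀ i, σ i ∈ L i) ∧ t ≤ #(S.filter fun c => ∀ i, σ i ≠ c) := by
  classical
  choose pick hpick using hL
  set G := S \ small.image pick
  have hG : #S - #small ≤ #G :=
    (Nat.sub_le_sub_left card_image_le _).trans (le_card_sdiff _ _)
  obtain ⟨U, hU, hUgood⟩ := exists_mem_powersetCard_forall_not_subset G (univ.filter (· ∉ small))
    L (by simpa using hlarge) hmt (by omega) <| by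
      calc _ ≤ Fintype.card ι * t ^ m := Nat.mul_le_mul_right _ (card_le_univ _)
        _ < _ := h
        _ ≤ _ := Nat.pow_le_pow_left (by omega) m
  rw [mem_powersetCard] at hU
  have hmiss : ∀ i, ∃ c ∈ L i, c ∉ U := by
    intro i
    by_cases hi : i ∈ small
    · exact ⟨pick i, hpick i, fun hc => (mem_sdiff.1 (hU.1 hc)).2 (mem_image_of_mem pick hi)⟩
    · exact not_subset.1 (hUgood i (by simpa using hi))
  choose σ hσL hσU using hmiss
  refine ⟨σ, hσL, hU.2 ▸ card_le_card fun c hc => ?_⟩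
  exact mem_filter.2 ⟨sdiff_subset (hU.1 hc), fun i hi => hσU i (hi ▸ hc)⟩

end Finset

namespace Real

theorem div_log_le_of_le_mul_log {x y : ℝ} (hx : exp 1 ≤ x) (hy : 0 < y) (h : x ≤ y * log y) :
    x / log x ≤ y := by
  have hlog : 1 ≤ log x := by rwa [le_log_iff_exp_le ((exp_pos 1).trans_le hx)]
  rw [div_le_iff₀ (by linarith)]
  rcases le_total y x with hyx | hxy
  · nlinarith [log_le_log hy hyx]
  · nlinarith

theorem five_mul_rpow_le_of_le_mul_log {x y : ℝ} (hx : exp 1 ≤ x)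
    (hlog : 5 * log x ≤ x ^ (3 / 10 : ℝ)) (hy : 0 < y) (h : x ≤ y * log y) :
    5 * x ^ (7 / 10 : ℝ) ≤ y := by
  have hx0 : 0 < x := (exp_pos 1).trans_le hx
  have hlogx : 0 < log x := log_pos ((one_lt_exp_iff.2 one_pos).trans_le hx)
  refine le_trans ?_ (div_log_le_of_le_mul_log hx hy h)
  rw [le_div_iff₀ hlogx]
  calc 5 * x ^ (7 / 10 : ℝ) * log x = x ^ (7 / 10 : ℝ) * (5 * log x) := by ring
    _ ≤ x ^ (7 / 10 : ℝ) * x ^ (3 / 10 : ℝ) := by gcongr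
    _ = x := by rw [← rpow_add hx0]; norm_num

theorem rpow_add_one_mul_ceil_le {ε x : ℝ} (hε0 : 0 ≤ ε) (hε1 : ε ≤ 1) (hx : 1 ≤ x) :
    (x ^ (ε / 5) + 1) * ⌈x ^ (ε / 2)⌉₊ ≤ 4 * x ^ (7 / 10 : ℝ) := by
  have hceil : (⌈x ^ (ε / 2)⌉₊ : ℝ) ≤ 2 * x ^ (ε / 2) :=
    (Nat.ceil_lt_two_mul (by linarith [one_le_rpow hx (by linarith : 0 ≤ ε / 2)])).le
  have h₁ : x ^ (ε / 5) * x ^ (ε / 2) ≤ x ^ (7 / 10 : ℝ) := by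
    rw [← rpow_add (by linarith)]
    exact rpow_le_rpow_of_exponent_le hx (by linarith)
  have h₂ : x ^ (ε / 2) ≤ x ^ (7 / 10 : ℝ) := rpow_le_rpow_of_exponent_le hx (by linarith)
  calc (x ^ (ε / 5) + 1) * ⌈x ^ (ε / 2)⌉₊ ≤ (x ^ (ε / 5) + 1) * (2 * x ^ (ε / 2)) := by
        gcongr
    _ ≤ 4 * x ^ (7 / 10 : ℝ) := by linarith

theorem mul_pow_lt_pow_of_rpow_mul_lt {x p t c : ℝ} {m : ℕ} (hx : 1 ≤ x) (ht : 0 ≤ t)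
    (hpm : 1 ≤ p * m) (h : x ^ p * t < c) : x * t ^ m < c ^ m := by
  have hm : m ≠ 0 := by rintro rfl; simp at hpm; linarith
  calc x * t ^ m ≤ (x ^ p) ^ m * t ^ m := by
        gcongr
        rw [← rpow_natCast, ← rpow_mul (by linarith)]
        exact self_le_rpow_of_one_le hx hpm
    _ = (x ^ p * t) ^ m := (mul_pow _ _ _).symm
    _ < c ^ m := pow_lt_pow_left₀ h (by positivity) hm

end Real

theorem Nat.mul_pow_lt_sub_pow_of_rpow_mul_add_le {n k s m t : ℕ} {p : ℝ}
    (hn : 1 ≤ n) (hpm : 1 ≤ p * m) (hmt : m ≤ t) (hts : t + s ≤ k)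
    (h : ((n : ℝ) ^ p + 1) * t + s ≤ k) : n * t ^ m < (k - s + 1 - m) ^ m := by
  have hmt' : (m : ℝ) ≤ t := by exact_mod_cast hmt
  have hcast : ((k - s + 1 - m : ℕ) : ℝ) = k - s + 1 - m := by
    rw [Nat.cast_sub (by omega), Nat.cast_add, Nat.cast_sub (by omega), Nat.cast_one]
  have := Real.mul_pow_lt_pow_of_rpow_mul_lt (c := k - s + 1 - m) (Nat.one_le_cast.2 hn)
    (Nat.cast_nonneg t) hpm (by linarith)
  exact_mod_cast hcast ▸ this

open Filter in
theorem eventually_exp_one_le_and_log_le_rpow {ε : ℝ} (hε : 0 < ε) :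
    ∀ᶠ Δ : ℕ in atTop, exp 1 ≤ (Δ : ℝ) ∧ 5 * log Δ ≤ (Δ : ℝ) ^ (3 / 10 : ℝ) ∧
      5 / ε ≤ (Δ : ℝ) ^ (ε / 2) := by
  refine tendsto_natCast_atTop_atTop.eventually (p := fun x : ℝ =>
    exp 1 ≤ x ∧ 5 * log x ≤ x ^ (3 / 10 : ℝ) ∧ 5 / ε ≤ x ^ (ε / 2)) ?_
  refine (eventually_ge_atTop _).and (Eventually.and ?_ ?_)
  · filter_upwards [(isLittleO_log_rpow_atTop (by norm_num : (0 : ℝ) < 3 / 10)).def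
      (by norm_num : (0 : ℝ) < 1 / 5), eventually_ge_atTop 1] with x hx hx1
    rw [norm_of_nonneg (log_nonneg hx1), norm_of_nonneg (by positivity)] at hx
    linarith
  · exact (tendsto_rpow_atTop (by positivity)).eventually_ge_atTop _

theorem stmt_19 (ε : ℝ) (hε0 : 0 < ε) (hε1 : ε < 1) :
    ∃ Δ₀ : ℕ, ∀ Δ : ℕ, Δ₀ ≤ Δ → ∀ k : ℕ, (Δ : ℝ) ≤ (1 - ε) * k * Real.log k →
    ∀ L : Fin Δ → Finset ℕ, (∀ i, (L i).Nonempty) → (∀ i, L i ⊆ Finset.Icc 1 k) →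
      ((Finset.univ.filter
          (fun i : Fin Δ => ((L i).card : ℝ) ≤ 5 / ε)).card : ℝ) ≤ ε * k / 5 →
      ∃ σ : Fin Δ → ℕ, (∀ i, σ i ∈ L i) ∧
        (Δ : ℝ) ^ (ε / 2) ≤
          (((Finset.Icc 1 k).filter (fun c => ∀ i : Fin Δ, σ i ≠ c)).card : ℝ) := by
  obtain ⟨Δ₀, hΔ₀⟩ := Filter.eventually_atTop.1 (eventually_exp_one_le_and_log_le_rpow hε0)
  refine ⟨Δ₀, fun Δ hΔ k hk L hL _ hsmall => ?_⟩
  obtain ⟨he, hlog, hεΔ⟩ := hΔ₀ Δ hΔ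
  have hΔ1 : (1 : ℝ) ≤ Δ := (one_le_exp zero_le_one).trans he
  have hΔk : (Δ : ℝ) ≤ k * log k := hk.trans (by nlinarith [log_natCast_nonneg k])
  have hk0 : (0 : ℝ) < k := Nat.cast_pos.2 <| Nat.pos_of_ne_zero <| by
    rintro rfl
    simp only [CharP.cast_eq_zero, zero_mul] at hΔk
    linarith
  set small := univ.filter fun i : Fin Δ => ((L i).card : ℝ) ≤ 5 / ε
  set t := ⌈(Δ : ℝ) ^ (ε / 2)⌉₊
  have hroom : ((Δ : ℝ) ^ (ε / 5) + 1) * t + #small ≤ k := by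
    have := rpow_add_one_mul_ceil_le hε0.le hε1.le hΔ1
    nlinarith [five_mul_rpow_le_of_le_mul_log he hlog hk0 hΔk]
  have hm : 1 ≤ ε / 5 * ⌈5 / ε⌉₊ := by
    have := Nat.le_ceil (5 / ε)
    rw [div_le_iff₀ hε0] at this
    linarith
  have hts : t + #small ≤ k := by
    have : (0 : ℝ) ≤ (Δ : ℝ) ^ (ε / 5) * t := by positivity
    exact_mod_cast (show (t : ℝ) + #small ≤ k by linarith)
  have hcount := Nat.mul_pow_lt_sub_pow_of_rpow_mul_add_le
    (Nat.one_le_cast.1 hΔ1) hm (Nat.ceil_mono hεΔ) hts hroom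
  obtain ⟨σ, hσ, hunused⟩ := exists_choice_le_card_unused L hL (Icc 1 k) small
    (fun i hi => Nat.ceil_le.2 (le_of_lt (by simpa [small] using hi))) (Nat.ceil_mono hεΔ)
    (by simpa using hts) (by simpa using hcount)
  exact ⟨σ, hσ, (Nat.le_ceil _).trans (by exact_mod_cast hunused)⟩
end
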